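/- Let λ > 0 and let P = (a,b) ∈ Ω_λ with λ|b| < 1. The λ-Funk distance from P to the horizontal line s: x₂ = c (with λ|c| < 1) is d_F(P,s) = (1/λ)ln[(λ²bc - 1 - λ|c - b|)/(λ²c² - 1)], realized at the point Q* = (a/r, c) ∈ s where r = (λ²bc - 1 - λ|c-b|)/(λ²c² - 1); i.e., d_F(P,Q*) = (1/λ)ln r and d_F(P,Q') ≥ (1/λ)ln r for all Q' ∈ s ∩ Ω_λ. -/

import Mathlib

/-!
For `P ≠ Q` the number `R` under the logarithm in `dF` satisfies `λ‖P - R • Q‖ = R - 1`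
(the characterization `‖P/R - Q‖ = (R - 1)/(λR)`), and when `λ‖Q‖ < 1` it is the only such
`R`, because `R ↦ R - λ‖P - R • Q‖` is strictly increasing. For `Q = (a', c)` we have
`‖P - R • Q‖ ≥ |b - R c|`, and the explicit `r` of the statement solves the one-dimensional
equation `λ|b - r c| = r - 1`; monotonicity gives `r ≤ R`, with equality at `Q* = (a/r, c)`,
where `P - r • Q* = (0, b - r c)`.
-/

open RealInnerProductSpace Classical

noncomputable def pt (a b : ℝ) : EuclideanSpace ℝ (Fin 2) :=
  (WithLp.equiv 2 (Fin 2 → ℝ)).symm ![a, b]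

/-- The λ-Funk metric. -/
noncomputable def Funk (lam : ℝ) (x y : EuclideanSpace ℝ (Fin 2)) : ℝ :=
  (Real.sqrt (lam ^ 2 * ⟪x, y⟫ ^ 2 + ‖y‖ ^ 2 * (1 - lam ^ 2 * ‖x‖ ^ 2)) + lam * ⟪x, y⟫) /
    (1 - lam ^ 2 * ‖x‖ ^ 2)

/-- The λ-Funk distance. -/
noncomputable def dF (lam : ℝ) (P Q : EuclideanSpace ℝ (Fin 2)) : ℝ :=
  if P = Q then 0
  else (1 / lam) * Real.log
    ((Real.sqrt (lam ^ 2 * ⟪P, Q - P⟫ ^ 2 + (1 - lam ^ 2 * ‖P‖ ^ 2) * ‖Q - P‖ ^ 2)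
        - lam * ⟪P, Q - P⟫) /
     (Real.sqrt (lam ^ 2 * ⟪P, Q - P⟫ ^ 2 + (1 - lam ^ 2 * ‖P‖ ^ 2) * ‖Q - P‖ ^ 2)
        - lam * ⟪Q, Q - P⟫))

section NormedSpace

variable {E : Type*} [SeminormedAddCommGroup E] [NormedSpace ℝ E] {lam R : ℝ} {P Q : E}

theorem strictMono_sub_mul_norm_sub_smul (hlam : 0 ≤ lam) (hQ : lam * ‖Q‖ < 1) :
    StrictMono fun R : ℝ => R - lam * ‖P - R • Q‖ := by
  intro R R' hRR'
  have htri : ‖P - R' • Q‖ ≤ ‖P - R • Q‖ + (R' - R) * ‖Q‖ := by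
    calc ‖P - R' • Q‖ ≤ ‖P - R • Q‖ + ‖R • Q - R' • Q‖ := norm_sub_le_norm_sub_add_norm_sub _ _ _
      _ = ‖P - R • Q‖ + (R' - R) * ‖Q‖ := by
        rw [norm_sub_rev (R • Q), ← sub_smul, norm_smul, Real.norm_of_nonneg (sub_nonneg.2 hRR'.le)]
  have : lam * ((R' - R) * ‖Q‖) < R' - R := by nlinarith [sub_pos.2 hRR']
  have := mul_le_mul_of_nonneg_left htri hlam
  rw [mul_add] at this
  show R - _ < R' - _
  linarith

theorem mul_norm_lt_one_of_mul_norm_sub_smul_le (hlam : 0 ≤ lam) (hP : lam * ‖P‖ < 1) (hR0 : 0 < R)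
    (hR : lam * ‖P - R • Q‖ ≤ R - 1) : lam * ‖Q‖ < 1 := by
  have : R * (lam * ‖Q‖) < R * 1 := by
    calc R * (lam * ‖Q‖) = lam * ‖P - (P - R • Q)‖ := by
          rw [sub_sub_cancel, norm_smul, Real.norm_of_nonneg hR0.le]; ring
      _ ≤ lam * ‖P‖ + lam * ‖P - R • Q‖ := by rw [← mul_add]; gcongr; exact norm_sub_le _ _
      _ < R * 1 := by linarith
  exact lt_of_mul_lt_mul_left this hR0.le

end NormedSpace

section FunkRatio

variable {E : Type*} [NormedAddCommGroup E] [InnerProductSpace ℝ E] {lam R : ℝ} {P Q : E}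

noncomputable def funkRatio (lam : ℝ) (P Q : E) : ℝ :=
  (Real.sqrt (lam ^ 2 * ⟪P, Q - P⟫ ^ 2 + (1 - lam ^ 2 * ‖P‖ ^ 2) * ‖Q - P‖ ^ 2) - lam * ⟪P, Q - P⟫) /
    (Real.sqrt (lam ^ 2 * ⟪P, Q - P⟫ ^ 2 + (1 - lam ^ 2 * ‖P‖ ^ 2) * ‖Q - P‖ ^ 2) - lam * ⟪Q, Q - P⟫)

theorem mul_norm_sub_funkRatio_smul (hlam : 0 ≤ lam) (hQ : lam * ‖Q‖ < 1) (hPQ : P ≠ Q) :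
    lam * ‖P - funkRatio lam P Q • Q‖ = funkRatio lam P Q - 1 := by
  obtain ⟨v, rfl⟩ : ∃ v, Q = P + v := ⟨Q - P, by abel⟩
  have hv : 0 < ‖v‖ := norm_pos_iff.2 fun h => hPQ (by simp [h])
  have hQ2 : ‖P + v‖ ^ 2 = ‖P‖ ^ 2 + 2 * ⟪P, v⟫ + ‖v‖ ^ 2 := norm_add_sq_real P v
  have hiq : ⟪P + v, v⟫ = ⟪P, v⟫ + ‖v‖ ^ 2 := by
    rw [inner_add_left, real_inner_self_eq_norm_sq]
  simp only [funkRatio, add_sub_cancel_left, hiq]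
  set S := Real.sqrt (lam ^ 2 * ⟪P, v⟫ ^ 2 + (1 - lam ^ 2 * ‖P‖ ^ 2) * ‖v‖ ^ 2)
  have hgap : 0 < ‖v‖ ^ 2 * (1 - (lam * ‖P + v‖) ^ 2) :=
    mul_pos (by positivity) (by nlinarith [mul_nonneg hlam (norm_nonneg (P + v))])
  have harg : lam ^ 2 * ⟪P, v⟫ ^ 2 + (1 - lam ^ 2 * ‖P‖ ^ 2) * ‖v‖ ^ 2
      = (lam * (⟪P, v⟫ + ‖v‖ ^ 2)) ^ 2 + ‖v‖ ^ 2 * (1 - (lam * ‖P + v‖) ^ 2) := by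
    linear_combination lam ^ 2 * ‖v‖ ^ 2 * hQ2
  have hS2 : S ^ 2 = lam ^ 2 * ⟪P, v⟫ ^ 2 + (1 - lam ^ 2 * ‖P‖ ^ 2) * ‖v‖ ^ 2 :=
    Real.sq_sqrt (by rw [harg]; positivity)
  have hD : 0 < S - lam * (⟪P, v⟫ + ‖v‖ ^ 2) := by
    have := abs_lt_of_sq_lt_sq (a := lam * (⟪P, v⟫ + ‖v‖ ^ 2)) (b := S) (by linarith)
      (Real.sqrt_nonneg _)
    linarith [(abs_lt.1 this).2]
  set D := S - lam * (⟪P, v⟫ + ‖v‖ ^ 2)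
  set R := (S - lam * ⟪P, v⟫) / D
  have hW : D • (P - R • (P + v)) = -((lam * ‖v‖ ^ 2) • P + (S - lam * ⟪P, v⟫) • v) := by
    rw [smul_sub, smul_smul, mul_div_cancel₀ _ hD.ne']
    simp only [D]
    module
  have hWn : ‖(lam * ‖v‖ ^ 2) • P + (S - lam * ⟪P, v⟫) • v‖ = ‖v‖ ^ 2 := by
    refine (sq_eq_sq₀ (norm_nonneg _) (sq_nonneg _)).1 ?_
    rw [norm_add_sq_real, norm_smul, norm_smul, real_inner_smul_left, real_inner_smul_right,
      mul_pow, mul_pow, Real.norm_eq_abs, Real.norm_eq_abs, sq_abs, sq_abs]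
    linear_combination ‖v‖ ^ 2 * hS2
  have hDx : D * ‖P - R • (P + v)‖ = ‖v‖ ^ 2 := by
    rw [← abs_of_pos hD, ← Real.norm_eq_abs, ← norm_smul, hW, norm_neg, hWn]
  rw [div_sub_one hD.ne', eq_div_iff hD.ne']
  linear_combination lam * hDx

theorem funkRatio_eq_of_mul_norm_sub_smul_eq (hlam : 0 ≤ lam) (hQ : lam * ‖Q‖ < 1) (hPQ : P ≠ Q)
    (hR : lam * ‖P - R • Q‖ = R - 1) : funkRatio lam P Q = R :=
  (strictMono_sub_mul_norm_sub_smul hlam hQ).injective <| by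
    rw [mul_norm_sub_funkRatio_smul hlam hQ hPQ, hR]; ring

theorem le_funkRatio_of_sub_one_le_mul_norm_sub_smul (hlam : 0 ≤ lam) (hQ : lam * ‖Q‖ < 1)
    (hPQ : P ≠ Q) (hR : R - 1 ≤ lam * ‖P - R • Q‖) : R ≤ funkRatio lam P Q :=
  (strictMono_sub_mul_norm_sub_smul hlam hQ).le_iff_le.1 <| by
    rw [mul_norm_sub_funkRatio_smul hlam hQ hPQ]; linarith

end FunkRatio

section FunkDistance

variable {lam R : ℝ} {P Q : EuclideanSpace ℝ (Fin 2)}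

theorem dF_eq_of_ne (hPQ : P ≠ Q) : dF lam P Q = 1 / lam * Real.log (funkRatio lam P Q) := by
  rw [dF, if_neg hPQ]; rfl

theorem dF_eq_of_mul_norm_sub_smul_eq (hlam : 0 ≤ lam) (hP : lam * ‖P‖ < 1)
    (hR : lam * ‖P - R • Q‖ = R - 1) : dF lam P Q = 1 / lam * Real.log R := by
  have hR1 : 1 ≤ R := by linarith [mul_nonneg hlam (norm_nonneg (P - R • Q))]
  have hQ := mul_norm_lt_one_of_mul_norm_sub_smul_le hlam hP (by linarith) hR.le
  by_cases hPQ : P = Q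
  · subst hPQ
    have : R = 1 := (strictMono_sub_mul_norm_sub_smul (P := P) hlam hQ).injective <| by
      rw [hR, one_smul, sub_self, norm_zero, mul_zero]; ring
    rw [dF, if_pos rfl, this, Real.log_one, mul_zero]
  · rw [dF_eq_of_ne hPQ, funkRatio_eq_of_mul_norm_sub_smul_eq hlam hQ hPQ hR]

theorem log_le_dF_of_sub_one_le_mul_norm_sub_smul (hlam : 0 ≤ lam) (hQ : lam * ‖Q‖ < 1)
    (hR0 : 0 < R) (hR : R - 1 ≤ lam * ‖P - R • Q‖) : 1 / lam * Real.log R ≤ dF lam P Q := by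
  by_cases hPQ : P = Q
  · subst hPQ
    have : R ≤ 1 := (strictMono_sub_mul_norm_sub_smul (P := P) hlam hQ).le_iff_le.1 <| by
      rw [one_smul, sub_self, norm_zero, mul_zero]; linarith
    rw [dF, if_pos rfl]
    exact mul_nonpos_of_nonneg_of_nonpos (by positivity) (Real.log_nonpos hR0.le this)
  · rw [dF_eq_of_ne hPQ]
    gcongr
    exact le_funkRatio_of_sub_one_le_mul_norm_sub_smul hlam hQ hPQ hR

end FunkDistance

theorem pt_sub_smul_pt (a b a' c R : ℝ) : pt a b - R • pt a' c = pt (a - R * a') (b - R * c) := by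
  ext i; fin_cases i <;> simp [pt]

theorem norm_pt (x y : ℝ) : ‖pt x y‖ = Real.sqrt (x ^ 2 + y ^ 2) := by
  simp [pt, EuclideanSpace.norm_eq, Fin.sum_univ_two]

theorem abs_le_norm_pt (x y : ℝ) : |y| ≤ ‖pt x y‖ :=
  norm_pt x y ▸ Real.abs_le_sqrt (by nlinarith [sq_nonneg x])

theorem norm_pt_zero_left (y : ℝ) : ‖pt 0 y‖ = |y| := by
  rw [norm_pt, zero_pow two_ne_zero, zero_add, Real.sqrt_sq_eq_abs]

noncomputable def funkLineRatio (lam b c : ℝ) : ℝ :=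
  (lam ^ 2 * b * c - 1 - lam * |c - b|) / (lam ^ 2 * c ^ 2 - 1)

theorem funkLineRatio_sub_one {lam : ℝ} (b : ℝ) {c : ℝ} (hlam : 0 ≤ lam) (hc : lam * |c| < 1) :
    funkLineRatio lam b c - 1 = lam * |b - funkLineRatio lam b c * c| := by
  have hc₁ : 0 < 1 - lam * c := by nlinarith [le_abs_self c]
  have hc₂ : 0 < 1 + lam * c := by nlinarith [neg_abs_le c]
  have hD : lam ^ 2 * c ^ 2 - 1 = -((1 - lam * c) * (1 + lam * c)) := by ring
  rcases le_total b c with hbc | hbc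
  · have hr : funkLineRatio lam b c = 1 + lam * (c - b) / (1 - lam * c) := by
      rw [funkLineRatio, abs_of_nonneg (sub_nonneg.2 hbc), hD]
      field_simp [hc₁.ne', hc₂.ne']
      ring
    have hb : b - funkLineRatio lam b c * c = -((c - b) / (1 - lam * c)) := by
      rw [hr]; field_simp [hc₁.ne', hc₂.ne']; ring
    rw [hb, abs_neg, abs_of_nonneg (div_nonneg (sub_nonneg.2 hbc) hc₁.le), hr]
    ring
  · have hr : funkLineRatio lam b c = 1 + lam * (b - c) / (1 + lam * c) := by
      rw [funkLineRatio, abs_of_nonpos (sub_nonpos.2 hbc), hD]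
      field_simp [hc₁.ne', hc₂.ne']
      ring
    have hb : b - funkLineRatio lam b c * c = (b - c) / (1 + lam * c) := by
      rw [hr]; field_simp [hc₁.ne', hc₂.ne']; ring
    rw [hb, abs_of_nonneg (div_nonneg (sub_nonneg.2 hbc) hc₂.le), hr]
    ring

theorem dF_point_to_line_general (lam a b c : ℝ) (hlam : 0 < lam)
    (hP : ‖pt a b‖ < 1 / lam) (hc : lam * |c| < 1) :
    dF lam (pt a b) (pt (a / ((lam ^ 2 * b * c - 1 - lam * |c - b|) / (lam ^ 2 * c ^ 2 - 1))) c)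
        = (1 / lam) * Real.log ((lam ^ 2 * b * c - 1 - lam * |c - b|) / (lam ^ 2 * c ^ 2 - 1)) ∧
    ∀ a' : ℝ, ‖pt a' c‖ < 1 / lam →
      (1 / lam) * Real.log ((lam ^ 2 * b * c - 1 - lam * |c - b|) / (lam ^ 2 * c ^ 2 - 1)) ≤
        dF lam (pt a b) (pt a' c) := by
  rw [← funkLineRatio]
  have hr := funkLineRatio_sub_one b hlam.le hc
  have hr0 : 0 < funkLineRatio lam b c := by
    linarith [mul_nonneg hlam.le (abs_nonneg (b - funkLineRatio lam b c * c))]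
  refine ⟨dF_eq_of_mul_norm_sub_smul_eq hlam.le ((lt_div_iff₀' hlam).1 hP) ?_,
    fun a' hQ => log_le_dF_of_sub_one_le_mul_norm_sub_smul hlam.le ((lt_div_iff₀' hlam).1 hQ) hr0 ?_⟩
  · rw [pt_sub_smul_pt, mul_div_cancel₀ _ hr0.ne', sub_self, norm_pt_zero_left, hr]
  · rw [pt_sub_smul_pt, hr]
    exact mul_le_mul_of_nonneg_left (abs_le_norm_pt _ _) hlam.le

theorem dF_point_to_line (lam a b c : ℝ) (hlam : 0 < lam)
    (hP : ‖pt a b‖ < 1 / lam) (hb : lam * |b| < 1) (hc : lam * |c| < 1) :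
    dF lam (pt a b) (pt (a / ((lam ^ 2 * b * c - 1 - lam * |c - b|) / (lam ^ 2 * c ^ 2 - 1))) c)
        = (1 / lam) * Real.log ((lam ^ 2 * b * c - 1 - lam * |c - b|) / (lam ^ 2 * c ^ 2 - 1)) ∧
    ∀ a' : ℝ, ‖pt a' c‖ < 1 / lam →
      (1 / lam) * Real.log ((lam ^ 2 * b * c - 1 - lam * |c - b|) / (lam ^ 2 * c ^ 2 - 1)) ≤
        dF lam (pt a b) (pt a' c) :=
  dF_point_to_line_general lam a b c hlam hP hc
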